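/- arXiv:1801.07173 — 2 statements merged into one kernel-verified Lean document; each statement's English description precedes it below -/
import Mathlib

section
/- Let K be a number field and m a nonzero ideal (modulus) of its ring of integers. Then the ray class group of K modulo m is finite. -/
open NumberField

section RayClass

variable (K : Type*) [Field K] [NumberField K]

/-- The group of invertible fractional ideals of `K`. -/
abbrev IdealGroup := (FractionalIdeal (nonZeroDivisors (𝓞 K)) K)ˣ

/-- The subgroup of (invertible) fractional ideals coprime to the modulus `m`: the subgroup
generated by the nonzero prime ideals not dividing `m`. -/
noncomputable def coprimeIdeals (m : Ideal (𝓞 K)) : Subgroup (IdealGroup K) :=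
  Subgroup.closure {I : IdealGroup K | ∃ P : Ideal (𝓞 K), P.IsPrime ∧ P ≠ ⊥ ∧ ¬ m ≤ P ∧
    (I : FractionalIdeal (nonZeroDivisors (𝓞 K)) K) = P}

/-- The ray modulo `m` (with the archimedean conditions of total positivity): the subgroup of
principal fractional ideals generated by elements `x ≡ 1 mod^× m` that are totally positive. -/
noncomputable def rayPrincipal (m : Ideal (𝓞 K)) : Subgroup (IdealGroup K) :=
  Subgroup.closure {I : IdealGroup K | ∃ x : K, x ≠ 0 ∧
    (I : FractionalIdeal (nonZeroDivisors (𝓞 K)) K) =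
      FractionalIdeal.spanSingleton (nonZeroDivisors (𝓞 K)) x ∧
    (∀ φ : K →+* ℝ, 0 < φ x) ∧
    ∃ a b : 𝓞 K, (algebraMap (𝓞 K) K b) * x = algebraMap (𝓞 K) K a ∧
      a - b ∈ m ∧ Ideal.span {b} ⊔ m = ⊤}

/-- The ray class group of `K` modulo `m`: fractional ideals coprime to `m` modulo the ray of
totally positive principal ideals generated by elements `x ≡ 1 mod^× m`. -/
def RayClassGroup (m : Ideal (𝓞 K)) : Type _ :=
  coprimeIdeals K m ⧸ ((rayPrincipal K m).subgroupOf (coprimeIdeals K m))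

noncomputable instance (m : Ideal (𝓞 K)) : CommGroup (RayClassGroup K m) :=
  QuotientGroup.Quotient.commGroup _

/-- `x` is the ray class modulo `m` of the integral ideal `J`. -/
def IsClassOf (m : Ideal (𝓞 K)) (J : Ideal (𝓞 K)) (x : RayClassGroup K m) : Prop :=
  ∃ (I : IdealGroup K) (hI : I ∈ coprimeIdeals K m),
    (I : FractionalIdeal (nonZeroDivisors (𝓞 K)) K) = J ∧
      x = QuotientGroup.mk (⟨I, hI⟩ : coprimeIdeals K m)

end RayClass

section AuxRay

open FractionalIdeal

/-- Sign of a real number as a unit of `ℤ`. -/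
noncomputable def signu (t : ℝ) : ℤˣ := if 0 < t then 1 else -1

lemma signu_pos {t : ℝ} (ht : t ≠ 0) (h : signu t = 1) : 0 < t := by
  by_contra h'
  simp only [signu, if_neg h'] at h
  exact absurd h (by decide)

lemma signu_one : signu 1 = 1 := by simp [signu]

lemma signu_mul {t u : ℝ} (ht : t ≠ 0) (hu : u ≠ 0) :
    signu (t * u) = signu t * signu u := by
  unfold signu
  rcases ht.lt_or_gt with h | h <;> rcases hu.lt_or_gt with h' | h'
  · rw [if_pos (mul_pos_of_neg_of_neg h h'), if_neg (asymm h), if_neg (asymm h')]; norm_num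
  · rw [if_neg (not_lt.mpr (mul_nonpos_of_nonpos_of_nonneg h.le h'.le)), if_neg (asymm h),
      if_pos h']; norm_num
  · rw [if_neg (not_lt.mpr (mul_nonpos_of_nonneg_of_nonpos h.le h'.le)), if_pos h,
      if_neg (asymm h')]; norm_num
  · rw [if_pos (mul_pos h h'), if_pos h, if_pos h']; norm_num

lemma signu_inv {t : ℝ} : signu t⁻¹ = signu t := by
  simp [signu, inv_pos]

variable {K : Type*} [Field K] [NumberField K]

lemma algMap_ne_zero {a : 𝓞 K} (ha : a ≠ 0) : algebraMap (𝓞 K) K a ≠ 0 :=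
  (map_ne_zero_iff (algebraMap (𝓞 K) K) (IsFractionRing.injective (𝓞 K) K)).mpr ha

lemma phi_ne_zero {x : K} (hx : x ≠ 0) (φ : K →+* ℝ) : φ x ≠ 0 :=
  (map_ne_zero φ).mpr hx

lemma phi_algMap_ne_zero {a : 𝓞 K} (ha : a ≠ 0) (φ : K →+* ℝ) :
    φ (algebraMap (𝓞 K) K a) ≠ 0 :=
  phi_ne_zero (algMap_ne_zero ha) φ

lemma coprime_struct {m : Ideal (𝓞 K)} {I : IdealGroup K} (hI : I ∈ coprimeIdeals K m) :
    ∃ N D : Ideal (𝓞 K), N ≠ ⊥ ∧ D ≠ ⊥ ∧ IsCoprime N m ∧ IsCoprime D m ∧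
      (I : FractionalIdeal (nonZeroDivisors (𝓞 K)) K) * D = N := by
  induction hI using Subgroup.closure_induction with
  | mem I hI =>
    obtain ⟨P, hP, hPbot, hPm, hIP⟩ := hI
    refine ⟨P, ⊤, hPbot, top_ne_bot, ?_, ?_, by simp [hIP]⟩
    · rw [Ideal.isCoprime_iff_sup_eq]
      by_contra h
      have hmax := hP.isMaximal hPbot
      exact hPm (le_sup_right.trans (le_of_eq (hmax.eq_of_le h le_sup_left).symm))
    · rw [Ideal.isCoprime_iff_sup_eq]; simp
  | one =>
    exact ⟨⊤, ⊤, top_ne_bot, top_ne_bot, by rw [Ideal.isCoprime_iff_sup_eq]; simp,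
      by rw [Ideal.isCoprime_iff_sup_eq]; simp, by simp⟩
  | mul I J hI hJ ihI ihJ =>
    obtain ⟨N₁, D₁, hN₁, hD₁, hcN₁, hcD₁, h₁⟩ := ihI
    obtain ⟨N₂, D₂, hN₂, hD₂, hcN₂, hcD₂, h₂⟩ := ihJ
    refine ⟨N₁ * N₂, D₁ * D₂, mul_ne_zero hN₁ hN₂, mul_ne_zero hD₁ hD₂,
      hcN₁.mul_left hcN₂, hcD₁.mul_left hcD₂, ?_⟩
    rw [Units.val_mul]
    push_cast
    rw [← h₁, ← h₂]
    ring
  | inv I hI ih =>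
    obtain ⟨N, D, hN, hD, hcN, hcD, h⟩ := ih
    refine ⟨D, N, hD, hN, hcD, hcN, ?_⟩
    have h2 : ((I⁻¹ : IdealGroup K) : FractionalIdeal (nonZeroDivisors (𝓞 K)) K) *
        ((I : IdealGroup K) * (D : FractionalIdeal (nonZeroDivisors (𝓞 K)) K)) =
        (D : FractionalIdeal (nonZeroDivisors (𝓞 K)) K) := by
      rw [← mul_assoc, Units.inv_mul, one_mul]
    rw [h] at h2
    exact h2

lemma principal_data {m : Ideal (𝓞 K)} {I : IdealGroup K} (hI : I ∈ coprimeIdeals K m)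
    {x : K} (hx : x ≠ 0)
    (hIx : (I : FractionalIdeal (nonZeroDivisors (𝓞 K)) K) =
      spanSingleton (nonZeroDivisors (𝓞 K)) x) :
    ∃ a b : 𝓞 K, b ≠ 0 ∧ b - 1 ∈ m ∧
      algebraMap (𝓞 K) K b * x = algebraMap (𝓞 K) K a ∧
      IsCoprime (Ideal.span {a}) m := by
  obtain ⟨N, D, hN, hD, hcN, hcD, hND⟩ := coprime_struct hI
  obtain ⟨b, hbD, hb0, hbm⟩ : ∃ b, b ∈ D ∧ b ≠ 0 ∧ b - 1 ∈ m := by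
    have h1 : (1 : 𝓞 K) ∈ D ⊔ m := by
      rw [Ideal.isCoprime_iff_sup_eq] at hcD; rw [hcD]; trivial
    obtain ⟨b, hbD, c, hcm, hbc⟩ := Submodule.mem_sup.mp h1
    by_cases hb : b = 0
    · have hm1 : m = ⊤ := (Ideal.eq_top_iff_one _).mpr (by rw [← hbc, hb, zero_add]; exact hcm)
      obtain ⟨d, hdD, hd0⟩ := Submodule.exists_mem_ne_zero_of_ne_bot hD
      exact ⟨d, hdD, hd0, by simp [hm1]⟩
    · refine ⟨b, hbD, hb, ?_⟩
      have : b - 1 = -c := by rw [← hbc]; ring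
      rw [this]; exact m.neg_mem hcm
  have hspanD : spanSingleton (nonZeroDivisors (𝓞 K)) x * (D : FractionalIdeal (nonZeroDivisors (𝓞 K)) K) =
      (N : FractionalIdeal (nonZeroDivisors (𝓞 K)) K) := by
    rw [← hIx]; exact hND
  have hxb : x * algebraMap (𝓞 K) K b ∈ (N : FractionalIdeal (nonZeroDivisors (𝓞 K)) K) := by
    rw [← hspanD]
    exact mul_mem_mul (mem_spanSingleton_self _ x) (mem_coeIdeal_of_mem _ hbD)
  obtain ⟨a, haN, ha⟩ := (mem_coeIdeal _).mp hxb
  refine ⟨a, b, hb0, hbm, by rw [mul_comm]; exact ha.symm, ?_⟩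
  have key : Ideal.span {a} * D = Ideal.span {b} * N := by
    apply FractionalIdeal.coeIdeal_injective (K := K)
    simp only [coeIdeal_mul, coeIdeal_span_singleton]
    calc spanSingleton (nonZeroDivisors (𝓞 K)) (algebraMap (𝓞 K) K a) *
          (D : FractionalIdeal (nonZeroDivisors (𝓞 K)) K)
        = spanSingleton _ x * spanSingleton _ (algebraMap (𝓞 K) K b) *
          (D : FractionalIdeal (nonZeroDivisors (𝓞 K)) K) := by
          rw [spanSingleton_mul_spanSingleton, ← ha]
      _ = spanSingleton _ (algebraMap (𝓞 K) K b) *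
          (spanSingleton (nonZeroDivisors (𝓞 K)) x *
            (D : FractionalIdeal (nonZeroDivisors (𝓞 K)) K)) := by ring
      _ = spanSingleton _ (algebraMap (𝓞 K) K b) *
          (N : FractionalIdeal (nonZeroDivisors (𝓞 K)) K) := by rw [hspanD]
  rw [Ideal.isCoprime_iff_sup_eq]
  by_contra h
  obtain ⟨P, hPmax, hP⟩ := Ideal.exists_le_maximal _ h
  have haP : Ideal.span {a} ≤ P :=
    (Ideal.span_singleton_le_iff_mem P).mpr (hP (Ideal.mem_sup_left (Ideal.subset_span rfl)))
  have hmP : m ≤ P := le_sup_right.trans hP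
  have h2 : Ideal.span {b} * N ≤ P := by
    rw [← key]; exact le_trans (Ideal.mul_le_inf.trans inf_le_left) haP
  rcases (hPmax.isPrime.mul_le).mp h2 with hbP | hNP
  · have h1P : (1 : 𝓞 K) ∈ P := by
      have : (1 : 𝓞 K) = b - (b - 1) := by ring
      rw [this]
      exact P.sub_mem (hbP (Ideal.subset_span rfl)) (hmP hbm)
    exact hPmax.ne_top ((Ideal.eq_top_iff_one _).mpr h1P)
  · have : (⊤ : Ideal (𝓞 K)) ≤ P := by
      rw [← Ideal.isCoprime_iff_sup_eq.mp hcN]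
      exact sup_le hNP hmP
    exact hPmax.ne_top (top_le_iff.mp this)

end AuxRay

set_option maxHeartbeats 2000000 in
set_option synthInstance.maxHeartbeats 400000 in
/-- Let `K` be a number field and `m` a nonzero ideal (modulus) of its ring of integers. Then
the ray class group of `K` modulo `m` is finite. -/
theorem stmt_7 (K : Type*) [Field K] [NumberField K] (m : Ideal (𝓞 K)) (hm : m ≠ ⊥) :
    Finite (RayClassGroup K m) := by
  classical
  let C : Subgroup (IdealGroup K) := coprimeIdeals K m
  let N' : Subgroup C := (rayPrincipal K m).subgroupOf C
  let g : C →* ClassGroup (𝓞 K) := (ClassGroup.mk K).comp C.subtype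
  haveI hfinCH : Finite (C ⧸ g.ker) :=
    Finite.of_injective _ (QuotientGroup.kerLift_injective g)
  have hNH : N' ≤ g.ker := by
    have hRprin : rayPrincipal K m ≤ (ClassGroup.mk (R := 𝓞 K) (K := K)).ker := by
      rw [rayPrincipal, Subgroup.closure_le]
      rintro I ⟨x, hx0, hIx, -, -⟩
      have : ClassGroup.mk K I = 1 :=
        ClassGroup.mk_eq_one_iff.mpr ⟨⟨x, by rw [hIx, FractionalIdeal.coe_spanSingleton]⟩⟩
      exact this
    intro I hI
    exact hRprin hI
  haveI : Finite (𝓞 K ⧸ m) := Ideal.finiteQuotientOfFreeOfNeBot m hm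
  -- the target group
  let u : (𝓞 K)ˣ →* ((𝓞 K ⧸ m)ˣ × ((K →+* ℝ) → ℤˣ)) :=
    MonoidHom.prod (Units.map (Ideal.Quotient.mk m).toMonoidHom)
      { toFun := fun ε φ => signu (φ (algebraMap (𝓞 K) K (ε : 𝓞 K)))
        map_one' := by funext φ; simp [signu]
        map_mul' := fun ε₁ ε₂ => by
          funext φ
          have h1 : φ (algebraMap (𝓞 K) K ((ε₁ : (𝓞 K)ˣ) : 𝓞 K)) ≠ 0 :=
            phi_algMap_ne_zero ε₁.ne_zero φ
          have h2 : φ (algebraMap (𝓞 K) K ((ε₂ : (𝓞 K)ˣ) : 𝓞 K)) ≠ 0 :=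
            phi_algMap_ne_zero ε₂.ne_zero φ
          simp only [Units.val_mul, _root_.map_mul, Pi.mul_apply]
          exact signu_mul h1 h2 }
  let T := ((𝓞 K ⧸ m)ˣ × ((K →+* ℝ) → ℤˣ)) ⧸ u.range
  haveI : Finite T := Quotient.finite _
  -- data for principal coprime ideals
  have hdata : ∀ I : g.ker, ∃ x : K, ∃ a b : 𝓞 K, x ≠ 0 ∧
      (((I : C) : IdealGroup K) : FractionalIdeal (nonZeroDivisors (𝓞 K)) K) =
        FractionalIdeal.spanSingleton (nonZeroDivisors (𝓞 K)) x ∧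
      b ≠ 0 ∧ b - 1 ∈ m ∧ algebraMap (𝓞 K) K b * x = algebraMap (𝓞 K) K a ∧
      IsCoprime (Ideal.span {a}) m := by
    rintro ⟨⟨I, hIC⟩, hIker⟩
    have h1 : ClassGroup.mk K I = 1 := hIker
    obtain ⟨x, hx⟩ := (ClassGroup.mk_eq_one_iff.mp h1).principal
    have hIx : (I : FractionalIdeal (nonZeroDivisors (𝓞 K)) K) =
        FractionalIdeal.spanSingleton (nonZeroDivisors (𝓞 K)) x := by
      apply FractionalIdeal.coeToSubmodule_injective
      simp only [FractionalIdeal.coe_spanSingleton]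
      exact hx
    have hx0 : x ≠ 0 := by
      intro h
      rw [h] at hIx
      simp only [FractionalIdeal.spanSingleton_zero] at hIx
      exact (Units.ne_zero I) hIx
    obtain ⟨a, b, hb0, hbm, hab, hcop⟩ := principal_data hIC hx0 hIx
    exact ⟨x, a, b, hx0, hIx, hb0, hbm, hab, hcop⟩
  choose xx aa bb hx0 hIx hb0 hbm hab hcop using hdata
  have hresunit : ∀ I : g.ker, IsUnit (Ideal.Quotient.mk m (aa I)) := by
    intro I
    have h1 : (1 : 𝓞 K) ∈ Ideal.span {aa I} ⊔ m := by
      rw [Ideal.isCoprime_iff_sup_eq.mp (hcop I)]; trivial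
    obtain ⟨s, hs, c, hcm, hsc⟩ := Submodule.mem_sup.mp h1
    obtain ⟨r, hr⟩ := Ideal.mem_span_singleton'.mp hs
    refine IsUnit.of_mul_eq_one (Ideal.Quotient.mk m r) ?_
    have hmk : Ideal.Quotient.mk m s = 1 := by
      have hc0 : Ideal.Quotient.mk m c = 0 := Ideal.Quotient.eq_zero_iff_mem.mpr hcm
      calc Ideal.Quotient.mk m s
          = Ideal.Quotient.mk m s + Ideal.Quotient.mk m c := by rw [hc0, add_zero]
        _ = Ideal.Quotient.mk m (s + c) := (map_add _ _ _).symm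
        _ = 1 := by rw [hsc, map_one]
    rw [← map_mul, mul_comm, hr, hmk]
  let f : g.ker → ((𝓞 K ⧸ m)ˣ × ((K →+* ℝ) → ℤˣ)) :=
    fun I => ((hresunit I).unit, fun φ => signu (φ (xx I)))
  let F : g.ker → T := fun I => QuotientGroup.mk (f I)
  -- key step
  have key : ∀ I J : g.ker, F I = F J →
      QuotientGroup.mk I = (QuotientGroup.mk J : g.ker ⧸ (N'.subgroupOf g.ker)) := by
    intro I J hFIJ
    rw [QuotientGroup.eq] at hFIJ ⊢
    obtain ⟨ε, hε⟩ := hFIJ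
    -- residue component
    have hres : (Ideal.Quotient.mk m ((ε : 𝓞 K))) * Ideal.Quotient.mk m (aa I) =
        Ideal.Quotient.mk m (aa J) := by
      have h1 : Units.map (Ideal.Quotient.mk m).toMonoidHom ε * (hresunit I).unit =
          (hresunit J).unit := by
        have h := congrArg Prod.fst hε
        simp only [Prod.fst_mul, Prod.fst_inv] at h
        have h2 : (u ε).1 * (hresunit I).unit = (hresunit J).unit := by
          rw [h, mul_comm, ← mul_assoc, mul_inv_cancel, one_mul]
        exact h2
      have := congrArg (Units.val) h1
      simpa using this
    -- sign component
    have hsgn : ∀ φ : K →+* ℝ, signu (φ (algebraMap (𝓞 K) K (ε : 𝓞 K))) =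
        (signu (φ (xx I)))⁻¹ * signu (φ (xx J)) := by
      intro φ
      have := congrFun (congrArg Prod.snd hε) φ
      simpa [u, f] using this
    -- the element y
    set d : 𝓞 K := ((ε⁻¹ : (𝓞 K)ˣ) : 𝓞 K) with hd
    have hd0 : d ≠ 0 := (ε⁻¹ : (𝓞 K)ˣ).ne_zero
    set e' : K := algebraMap (𝓞 K) K d with he'
    have he'0 : e' ≠ 0 := by
      rw [he']; exact algMap_ne_zero hd0
    have hde : d * (ε : 𝓞 K) = 1 := by
      rw [hd, ← Units.val_mul, inv_mul_cancel ε, Units.val_one]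
    have he'ε : e' * algebraMap (𝓞 K) K (ε : 𝓞 K) = 1 := by
      rw [he', ← map_mul, hde, map_one]
    set y : K := (xx I)⁻¹ * xx J * e' with hy
    have hy0 : y ≠ 0 := mul_ne_zero (mul_ne_zero (inv_ne_zero (hx0 I)) (hx0 J)) he'0
    set W : IdealGroup K := (((I : C) : IdealGroup K))⁻¹ * ((J : C) : IdealGroup K) with hW
    -- W is the span of y
    have hspe : FractionalIdeal.spanSingleton (nonZeroDivisors (𝓞 K)) e' = 1 := by
      rw [he', ← FractionalIdeal.coeIdeal_span_singleton,
        Ideal.span_singleton_eq_top.mpr (IsUnit.of_mul_eq_one _ hde),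
        FractionalIdeal.coeIdeal_top]
    have hcoeW : (W : FractionalIdeal (nonZeroDivisors (𝓞 K)) K) =
        FractionalIdeal.spanSingleton (nonZeroDivisors (𝓞 K)) y := by
      have hne : FractionalIdeal.spanSingleton (nonZeroDivisors (𝓞 K)) (xx I) ≠ 0 :=
        FractionalIdeal.spanSingleton_ne_zero_iff.mpr (hx0 I)
      apply mul_right_cancel₀ hne
      have hWx : (W : FractionalIdeal (nonZeroDivisors (𝓞 K)) K) *
          FractionalIdeal.spanSingleton (nonZeroDivisors (𝓞 K)) (xx I) =
          FractionalIdeal.spanSingleton (nonZeroDivisors (𝓞 K)) (xx J) := by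
        rw [← hIx I, ← hIx J, hW, Units.val_mul, mul_comm, ← mul_assoc, Units.mul_inv, one_mul]
      rw [hWx, FractionalIdeal.spanSingleton_mul_spanSingleton]
      have : y * xx I = xx J * e' := by
        calc y * xx I = xx J * e' * ((xx I)⁻¹ * xx I) := by rw [hy]; ring
          _ = xx J * e' := by rw [inv_mul_cancel₀ (hx0 I), mul_one]
      rw [this, ← FractionalIdeal.spanSingleton_mul_spanSingleton, hspe, mul_one]
    -- positivity
    have hpos : ∀ φ : K →+* ℝ, 0 < φ y := by
      intro φ
      have hxI : φ (xx I) ≠ 0 := by simpa using hx0 I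
      have hxJ : φ (xx J) ≠ 0 := by simpa using hx0 J
      have hφe' : φ e' ≠ 0 := by simpa using he'0
      have hεK : φ (algebraMap (𝓞 K) K (ε : 𝓞 K)) ≠ 0 :=
        phi_algMap_ne_zero ε.ne_zero φ
      have he'inv : φ e' = (φ (algebraMap (𝓞 K) K (ε : 𝓞 K)))⁻¹ := by
        apply eq_inv_of_mul_eq_one_left
        rw [← map_mul, he'ε, map_one]
      have hsy : signu (φ y) = 1 := by
        rw [hy, map_mul, map_mul, map_inv₀,
          signu_mul (mul_ne_zero (by simpa using inv_ne_zero hxI) hxJ) hφe',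
          signu_mul (by simpa using inv_ne_zero hxI) hxJ, signu_inv, he'inv, signu_inv,
          hsgn φ]
        generalize signu (φ (xx I)) = s
        generalize signu (φ (xx J)) = t
        revert s t
        decide
      exact signu_pos (by simpa using hy0) hsy
    -- the arithmetic witnesses
    set A : 𝓞 K := aa J * bb I * d with hA
    set B : 𝓞 K := bb J * aa I with hB
    have hBA : algebraMap (𝓞 K) K B * y = algebraMap (𝓞 K) K A := by
      apply mul_right_cancel₀ (hx0 I)
      have h1 := hab I
      have h2 := hab J
      calc algebraMap (𝓞 K) K B * y * xx I
          = algebraMap (𝓞 K) K (bb J) * algebraMap (𝓞 K) K (aa I) * xx J * e' *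
            ((xx I)⁻¹ * xx I) := by rw [hB, map_mul, hy]; ring
        _ = algebraMap (𝓞 K) K (aa I) * (algebraMap (𝓞 K) K (bb J) * xx J) * e' := by
            rw [inv_mul_cancel₀ (hx0 I)]; ring
        _ = algebraMap (𝓞 K) K (aa I) * algebraMap (𝓞 K) K (aa J) * e' := by rw [h2]
        _ = algebraMap (𝓞 K) K (aa J) * e' * (algebraMap (𝓞 K) K (bb I) * xx I) := by
            rw [h1]; ring
        _ = algebraMap (𝓞 K) K A * xx I := by rw [hA, map_mul, map_mul, ← he']; ring
    have hmkbI : Ideal.Quotient.mk m (bb I) = 1 := by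
      have := Ideal.Quotient.eq.mpr (hbm I)
      simpa using this
    have hmkbJ : Ideal.Quotient.mk m (bb J) = 1 := by
      have := Ideal.Quotient.eq.mpr (hbm J)
      simpa using this
    have hABm : A - B ∈ m := by
      rw [← Ideal.Quotient.eq]
      have hd1 : Ideal.Quotient.mk m d * Ideal.Quotient.mk m ((ε : 𝓞 K)) = 1 := by
        rw [← map_mul, hde, map_one]
      calc Ideal.Quotient.mk m A
          = Ideal.Quotient.mk m (aa J) * Ideal.Quotient.mk m (bb I) *
            Ideal.Quotient.mk m d := by rw [hA, map_mul, map_mul]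
        _ = Ideal.Quotient.mk m (aa J) * Ideal.Quotient.mk m d := by rw [hmkbI, mul_one]
        _ = (Ideal.Quotient.mk m ((ε : 𝓞 K)) * Ideal.Quotient.mk m (aa I)) *
            Ideal.Quotient.mk m d := by rw [hres]
        _ = Ideal.Quotient.mk m (aa I) *
            (Ideal.Quotient.mk m d * Ideal.Quotient.mk m ((ε : 𝓞 K))) := by ring
        _ = Ideal.Quotient.mk m (aa I) := by rw [hd1, mul_one]
        _ = Ideal.Quotient.mk m B := by rw [hB, map_mul, hmkbJ, one_mul]
    have hspanB : Ideal.span {B} ⊔ m = ⊤ := by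
      have hcb : IsCoprime (Ideal.span {bb J}) m := by
        rw [Ideal.isCoprime_iff_sup_eq]
        apply (Ideal.eq_top_iff_one _).mpr
        have : (1 : 𝓞 K) = bb J - (bb J - 1) := by ring
        rw [this]
        exact Submodule.sub_mem _ (Ideal.mem_sup_left (Ideal.subset_span rfl))
          (Ideal.mem_sup_right (hbm J))
      have := (hcb.mul_left (hcop I))
      rw [Ideal.isCoprime_iff_sup_eq] at this
      rw [hB, ← Ideal.span_singleton_mul_span_singleton]
      exact this
    -- conclude
    have hWray : W ∈ rayPrincipal K m := by
      apply Subgroup.subset_closure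
      exact ⟨y, hy0, hcoeW, hpos, A, B, hBA, hABm, hspanB⟩
    rw [Subgroup.mem_subgroupOf, Subgroup.mem_subgroupOf]
    have hcoe : (((((I⁻¹ * J : g.ker) : C)) : IdealGroup K)) = W := by
      rw [hW]
      push_cast
      ring
    rw [hcoe]
    exact hWray
  -- finiteness of the middle quotient
  haveI hfinHN : Finite (g.ker ⧸ (N'.subgroupOf g.ker)) := by
    have hsurj : Function.Surjective (fun t : T =>
        if h : ∃ I : g.ker, F I = t then
          (QuotientGroup.mk h.choose : g.ker ⧸ (N'.subgroupOf g.ker))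
        else (1 : g.ker ⧸ (N'.subgroupOf g.ker))) := by
      intro c
      obtain ⟨I, rfl⟩ := QuotientGroup.mk_surjective c
      refine ⟨F I, ?_⟩
      have hex : ∃ J : g.ker, F J = F I := ⟨I, rfl⟩
      simp only [dif_pos hex]
      exact key _ _ hex.choose_spec
    exact Finite.of_surjective _ hsurj
  -- index juggling
  have h1 : g.ker.index ≠ 0 := Subgroup.index_ne_zero_of_finite
  have h2 : (N'.subgroupOf g.ker).index ≠ 0 := Subgroup.index_ne_zero_of_finite
  have h3 : N'.relIndex g.ker * g.ker.index = N'.index := Subgroup.relIndex_mul_index hNH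
  have h4 : N'.index ≠ 0 := by
    rw [← h3]
    exact mul_ne_zero h2 h1
  haveI : N'.FiniteIndex := ⟨h4⟩
  exact inferInstanceAs (Finite (C ⧸ N'))
end

section
/- Let L/K be a cyclic extension of number fields with group C = Gal(L/K), and let D be the group of fractional ideals of L supported outside a fixed C-stable finite set S of primes of L lying over primes of K. Then the group D^C of C-invariant such ideals is generated by the ideals ∏_{P | p} P = p^{1/e_p(L/K)} for primes p of K outside S, and the index of the extended group of ideals of K in D^C equals ∏_{p ∉ S} e_p(L/K). -/
open NumberField

section Divisors

variable (K L : Type*) [Field K] [NumberField K] [Field L] [NumberField L] [Algebra K L]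

/-- The nonzero prime ideals of the ring of integers of `L`. -/
abbrev PrimesOf := {P : Ideal (𝓞 L) // P.IsPrime ∧ P ≠ ⊥}

/-- The group of divisors (fractional ideals written additively, i.e. the free abelian group on
the nonzero primes) of `L`. -/
abbrev DivisorGroup := PrimesOf L →₀ ℤ

variable {L}

/-- The subgroup of divisors supported outside the set `S` of primes. -/
noncomputable def divisorsOutside (S : Set (PrimesOf L)) : AddSubgroup (DivisorGroup L) where
  carrier := {d | ∀ P ∈ S, d P = 0}
  zero_mem' := by intro P _; simp
  add_mem' := by intro d e hd he P hP; simp [hd P hP, he P hP]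
  neg_mem' := by intro d hd P hP; simp [hd P hP]

variable (L)

/-- The subgroup of `Gal(L/K)`-invariant (ambiguous) divisors of `L`. -/
noncomputable def invariantDivisors : AddSubgroup (DivisorGroup L) where
  carrier := {d | ∀ (σ : 𝓞 L ≃ₐ[𝓞 K] 𝓞 L) (P Q : PrimesOf L),
    (Q : Ideal (𝓞 L)) = Ideal.comap (σ : 𝓞 L →+* 𝓞 L) (P : Ideal (𝓞 L)) → d Q = d P}
  zero_mem' := by intro σ P Q _; simp
  add_mem' := by intro d e hd he σ P Q h; simp [hd σ P Q h, he σ P Q h]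
  neg_mem' := by intro d hd σ P Q h; simp [hd σ P Q h]

variable {L}

/-- The primes of `K` lying below a set `S` of primes of `L`. -/
def primesBelow (S : Set (PrimesOf L)) : Set (Ideal (𝓞 K)) :=
  {p | ∃ P ∈ S, Ideal.comap (algebraMap (𝓞 K) (𝓞 L)) (P : Ideal (𝓞 L)) = p}

end Divisors

/-!
Since `Gal(L/K)` acts transitively on the primes above a prime `p` of `K`, an ambiguous divisor
is constant on each such fibre, hence a combination of the divisors `∏_{P ∣ p} P`; and all
`P ∣ p` share one ramification index `e_p`, so `p 𝓞_L = e_p • ∏_{P ∣ p} P`. An ambiguous divisor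
therefore comes from `K` iff its coefficient above every `p` is divisible by `e_p`. Reading these
coefficients modulo `e_p` at the finitely many ramified `p` (the prime divisors of the different)
is a surjection onto `∏ ℤ/e_p` whose kernel is exactly the group of divisors extended from `K`.
-/

open Ideal

lemma AddSubgroup.relIndex_eq_natCard_of_ker {A B : Type*} [AddGroup A] [AddGroup B]
    {H G : AddSubgroup A} (φ : A →+ B) (hker : ∀ d ∈ G, φ d = 0 ↔ d ∈ H)
    (hsurj : ∀ b, ∃ d ∈ G, φ d = b) : H.relIndex G = Nat.card B := by
  have hker' : (φ.comp G.subtype).ker = H.addSubgroupOf G := by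
    ext ⟨d, hd⟩
    exact hker d hd
  have hrange : (φ.comp G.subtype).range = ⊤ := by
    refine AddMonoidHom.range_eq_top.2 fun b => ?_
    obtain ⟨d, hd, rfl⟩ := hsurj b
    exact ⟨⟨d, hd⟩, rfl⟩
  rw [AddSubgroup.relIndex, ← hker', AddSubgroup.index_ker, hrange, AddSubgroup.card_top]

section AmbiguousDivisors

variable {K L : Type*} [Field K] [Field L] [Algebra K L]

lemma under_comap_algEquiv (σ : 𝓞 L ≃ₐ[𝓞 K] 𝓞 L) (P : Ideal (𝓞 L)) :
    (P.comap (σ : 𝓞 L →+* 𝓞 L)).under (𝓞 K) = P.under (𝓞 K) := by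
  rw [under_def, under_def, comap_comap, ← σ.toAlgHom_toRingHom, AlgHom.comp_algebraMap]

lemma PrimesOf.exists_under_eq {p : Ideal (𝓞 K)} (hp : p.IsPrime) (hp0 : p ≠ ⊥) :
    ∃ P : PrimesOf L, (P : Ideal (𝓞 L)).under (𝓞 K) = p := by
  obtain ⟨⟨P, hP, hPp⟩⟩ : Nonempty (p.primesOver (𝓞 L)) := inferInstance
  exact ⟨⟨P, hP, ne_bot_of_liesOver_of_ne_bot hp0 P⟩, hPp.over.symm⟩

variable (L) in
noncomputable def ramificationIdxOver (p : Ideal (𝓞 K)) : ℕ :=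
  sSup {n : ℕ | ∃ P : PrimesOf L,
    Ideal.comap (algebraMap (𝓞 K) (𝓞 L)) (P : Ideal (𝓞 L)) = p ∧
    n = Ideal.ramificationIdx' p (P : Ideal (𝓞 L))}

variable [NumberField L]

lemma PrimesOf.ramificationIdx'_under_ne_zero (P : PrimesOf L) :
    ramificationIdx' ((P : Ideal (𝓞 L)).under (𝓞 K)) (P : Ideal (𝓞 L)) ≠ 0 :=
  have := P.2.1
  IsDedekindDomain.ramificationIdx'_ne_zero_of_liesOver _ (Ideal.under_ne_bot (𝓞 K) P.2.2)

variable [NumberField K]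

variable (L) in
lemma PrimesOf.finite_setOf_under_eq (p : Ideal (𝓞 K)) :
    {P : PrimesOf L | (P : Ideal (𝓞 L)).under (𝓞 K) = p}.Finite := by
  refine ((Algebra.QuasiFinite.finite_primesOver p).preimage
    Subtype.val_injective.injOn).subset ?_
  rintro P rfl
  exact ⟨P.2.1, ⟨rfl⟩⟩

variable (K L) in
/-- A prime `P` with ramification index `e ≥ 2` has `P ^ (e - 1)` dividing the different, which
has only finitely many prime factors. -/
lemma finite_setOf_ramificationIdx'_ne_one :
    {p : Ideal (𝓞 K) | ∃ P : PrimesOf L, (P : Ideal (𝓞 L)).under (𝓞 K) = p ∧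
      ramificationIdx' p (P : Ideal (𝓞 L)) ≠ 1}.Finite := by
  refine ((Ideal.finite_factors (differentIdeal_ne_bot (A := 𝓞 K) (B := 𝓞 L))).image
    fun v => v.asIdeal.under (𝓞 K)).subset ?_
  rintro p ⟨P, rfl, he⟩
  have := P.2.1.isMaximal P.2.2
  set e := ramificationIdx' ((P : Ideal (𝓞 L)).under (𝓞 K)) (P : Ideal (𝓞 L))
  have hdvd : (P : Ideal (𝓞 L)) ^ (e - 1) ∣ differentIdeal (𝓞 K) (𝓞 L) :=
    pow_sub_one_dvd_differentIdeal _ _ e (Ideal.under_ne_bot (𝓞 K) P.2.2)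
      (dvd_iff_le.mpr le_pow_ramificationIdx')
  have he0 := P.ramificationIdx'_under_ne_zero (K := K)
  exact ⟨⟨P.1, P.2.1, P.2.2⟩, (dvd_pow_self _ (by omega)).trans hdvd, rfl⟩

variable (L) in
noncomputable def fiberDivisor (p : Ideal (𝓞 K)) : DivisorGroup L :=
  Finsupp.ofSupportFinite (fun P => if (P : Ideal (𝓞 L)).under (𝓞 K) = p then 1 else 0)
    ((PrimesOf.finite_setOf_under_eq L p).subset fun _ hP => by_contra fun h => hP (if_neg h))

lemma fiberDivisor_apply (p : Ideal (𝓞 K)) (P : PrimesOf L) :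
    fiberDivisor L p P = if (P : Ideal (𝓞 L)).under (𝓞 K) = p then 1 else 0 := rfl

lemma fiberDivisor_mem_invariantDivisors (p : Ideal (𝓞 K)) :
    fiberDivisor L p ∈ invariantDivisors K L := by
  rintro σ P Q hQ
  simp only [fiberDivisor_apply, hQ, under_comap_algEquiv]

lemma fiberDivisor_mem_divisorsOutside {S : Set (PrimesOf L)} {p : Ideal (𝓞 K)}
    (hp : p ∉ primesBelow K S) : fiberDivisor L p ∈ divisorsOutside S :=
  fun P hP => if_neg fun h => hp ⟨P, hP, h⟩

lemma eq_sum_fiberDivisor {d : DivisorGroup L}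
    (hd : Function.FactorsThrough d fun P : PrimesOf L => (P : Ideal (𝓞 L)).under (𝓞 K)) :
    d = ∑ p ∈ d.support.image (fun P : PrimesOf L => (P : Ideal (𝓞 L)).under (𝓞 K)),
      Function.extend (fun P : PrimesOf L => (P : Ideal (𝓞 L)).under (𝓞 K)) d 0 p •
        fiberDivisor L p := by
  classical
  ext Q
  simp only [Finsupp.finsetSum_apply, Finsupp.smul_apply, fiberDivisor_apply, smul_eq_mul,
    mul_ite, mul_one, mul_zero, Finset.sum_ite_eq, Finset.mem_image, Finsupp.mem_support_iff]
  split_ifs with h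
  · exact (hd.extend_apply 0 Q).symm
  · by_contra hQ
    exact h ⟨Q, hQ, rfl⟩

variable [IsGalois K L]

lemma PrimesOf.exists_algEquiv_comap_eq {P Q : PrimesOf L}
    (h : (P : Ideal (𝓞 L)).under (𝓞 K) = (Q : Ideal (𝓞 L)).under (𝓞 K)) :
    ∃ σ : 𝓞 L ≃ₐ[𝓞 K] 𝓞 L, (Q : Ideal (𝓞 L)) = (P : Ideal (𝓞 L)).comap (σ : 𝓞 L →+* 𝓞 L) := by
  obtain ⟨σ, hσ⟩ := exists_comap_galRestrict_eq (𝓞 K) K L (𝓞 L)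
    (p := (P : Ideal (𝓞 L)).under (𝓞 K)) ⟨P.2.1, ⟨rfl⟩⟩ ⟨Q.2.1, ⟨h⟩⟩
  exact ⟨_, hσ.symm⟩

lemma factorsThrough_under_of_mem_invariantDivisors {d : DivisorGroup L}
    (hd : d ∈ invariantDivisors K L) :
    Function.FactorsThrough d fun P : PrimesOf L => (P : Ideal (𝓞 L)).under (𝓞 K) := by
  intro P Q h
  obtain ⟨σ, hσ⟩ := PrimesOf.exists_algEquiv_comap_eq h
  exact (hd σ P Q hσ).symm

lemma ramificationIdxOver_under (P : PrimesOf L) :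
    ramificationIdxOver L ((P : Ideal (𝓞 L)).under (𝓞 K)) =
      ramificationIdx' ((P : Ideal (𝓞 L)).under (𝓞 K)) (P : Ideal (𝓞 L)) := by
  have hconst : ∀ n, (∃ Q : PrimesOf L,
      (Q : Ideal (𝓞 L)).under (𝓞 K) = (P : Ideal (𝓞 L)).under (𝓞 K) ∧
        n = ramificationIdx' ((P : Ideal (𝓞 L)).under (𝓞 K)) (Q : Ideal (𝓞 L))) →
      n = ramificationIdx' ((P : Ideal (𝓞 L)).under (𝓞 K)) (P : Ideal (𝓞 L)) := by
    rintro n ⟨Q, hQ, rfl⟩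
    obtain ⟨σ, hσ⟩ := PrimesOf.exists_algEquiv_comap_eq hQ.symm
    rw [hσ]
    exact ramificationIdx'_comap_eq _ σ _
  exact le_antisymm (csSup_le ⟨_, P, rfl, rfl⟩ fun n hn => (hconst n hn).le)
    (le_csSup ⟨_, fun n hn => (hconst n hn).le⟩ ⟨P, rfl, rfl⟩)

lemma ramificationIdxOver_smul_fiberDivisor_apply (p : Ideal (𝓞 K)) (P : PrimesOf L) :
    ((ramificationIdxOver L p : ℤ) • fiberDivisor L p) P =
      if (P : Ideal (𝓞 L)).under (𝓞 K) = p then (ramificationIdx' p (P : Ideal (𝓞 L)) : ℤ)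
      else 0 := by
  rw [Finsupp.smul_apply, fiberDivisor_apply]
  split_ifs with h
  · rw [← h, ramificationIdxOver_under, smul_eq_mul, mul_one]
  · rw [smul_zero]

variable (L) in
lemma finite_setOf_ramificationIdxOver_ne_one :
    {p : Ideal (𝓞 K) | p.IsPrime ∧ p ≠ ⊥ ∧ ramificationIdxOver L p ≠ 1}.Finite := by
  refine (finite_setOf_ramificationIdx'_ne_one K L).subset ?_
  rintro p ⟨hp, hp0, he⟩
  obtain ⟨P, rfl⟩ := PrimesOf.exists_under_eq (L := L) hp hp0
  exact ⟨P, rfl, by rwa [← ramificationIdxOver_under]⟩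

lemma under_notMem_primesBelow {S : Set (PrimesOf L)} {d : DivisorGroup L}
    (hd : d ∈ divisorsOutside S ⊓ invariantDivisors K L) {P : PrimesOf L} (hP : d P ≠ 0) :
    (P : Ideal (𝓞 L)).under (𝓞 K) ∉ primesBelow K S := by
  rintro ⟨Q, hQS, hQ⟩
  exact hP (factorsThrough_under_of_mem_invariantDivisors hd.2 hQ ▸ hd.1 Q hQS)

theorem divisorsOutside_inf_invariantDivisors_eq_closure (S : Set (PrimesOf L)) :
    divisorsOutside S ⊓ invariantDivisors K L = AddSubgroup.closure
      (fiberDivisor L '' {p | p.IsPrime ∧ p ≠ ⊥ ∧ p ∉ primesBelow K S}) := by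
  refine le_antisymm (fun d hd => ?_) ((AddSubgroup.closure_le _).2 ?_)
  · rw [eq_sum_fiberDivisor (factorsThrough_under_of_mem_invariantDivisors hd.2)]
    refine sum_mem fun p hp => zsmul_mem (AddSubgroup.subset_closure ?_) _
    obtain ⟨P, hP, rfl⟩ := Finset.mem_image.1 hp
    exact ⟨_, ⟨P.2.1.under _, under_ne_bot _ P.2.2,
      under_notMem_primesBelow hd (Finsupp.mem_support_iff.1 hP)⟩, rfl⟩
  · rintro _ ⟨p, ⟨-, -, hp⟩, rfl⟩
    exact ⟨fiberDivisor_mem_divisorsOutside hp, fiberDivisor_mem_invariantDivisors p⟩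

lemma mem_closure_ramificationIdxOver_smul_fiberDivisor_iff {S : Set (PrimesOf L)}
    {d : DivisorGroup L} (hd : d ∈ divisorsOutside S ⊓ invariantDivisors K L) :
    d ∈ AddSubgroup.closure ((fun p => (ramificationIdxOver L p : ℤ) • fiberDivisor L p) ''
        {p | p.IsPrime ∧ p ≠ ⊥ ∧ p ∉ primesBelow K S}) ↔
      ∀ P : PrimesOf L, (ramificationIdxOver L ((P : Ideal (𝓞 L)).under (𝓞 K)) : ℤ) ∣ d P := by
  refine ⟨fun h => ?_, fun h => ?_⟩
  · clear hd
    induction h using AddSubgroup.closure_induction with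
    | mem x hx =>
      obtain ⟨p, -, rfl⟩ := hx
      intro P
      rw [Finsupp.smul_apply, fiberDivisor_apply]
      split_ifs with hP
      · rw [hP, smul_eq_mul, mul_one]
      · rw [smul_zero]
        exact dvd_zero _
    | zero => exact fun _ => dvd_zero _
    | add x y _ _ hx hy => exact fun P => dvd_add (hx P) (hy P)
    | neg x _ hx => exact fun P => dvd_neg.2 (hx P)
  · have hfac := factorsThrough_under_of_mem_invariantDivisors hd.2
    rw [eq_sum_fiberDivisor hfac]
    refine sum_mem fun p hp => ?_
    obtain ⟨P, hP, rfl⟩ := Finset.mem_image.1 hp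
    obtain ⟨m, hm⟩ := h P
    rw [hfac.extend_apply, hm, mul_comm, mul_smul]
    refine zsmul_mem (AddSubgroup.subset_closure ?_) m
    exact ⟨_, ⟨P.2.1.under _, under_ne_bot _ P.2.2,
      under_notMem_primesBelow hd (Finsupp.mem_support_iff.1 hP)⟩, rfl⟩

lemma forall_ramificationIdxOver_dvd_iff {S : Set (PrimesOf L)} {d : DivisorGroup L}
    (hd : d ∈ divisorsOutside S ⊓ invariantDivisors K L) {R : Finset (Ideal (𝓞 K))}
    (hR : ∀ p, p.IsPrime → p ≠ ⊥ → p ∉ primesBelow K S → ramificationIdxOver L p ≠ 1 → p ∈ R)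
    {P : R → PrimesOf L} (hP : ∀ p, (P p : Ideal (𝓞 L)).under (𝓞 K) = p) :
    (∀ Q : PrimesOf L, (ramificationIdxOver L ((Q : Ideal (𝓞 L)).under (𝓞 K)) : ℤ) ∣ d Q) ↔
      ∀ p : R, (ramificationIdxOver L (p : Ideal (𝓞 K)) : ℤ) ∣ d (P p) := by
  refine ⟨fun h p => hP p ▸ h (P p), fun h Q => ?_⟩
  by_cases hQ : d Q = 0
  · rw [hQ]
    exact dvd_zero _
  by_cases he : ramificationIdxOver L ((Q : Ideal (𝓞 L)).under (𝓞 K)) = 1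
  · rw [he, Nat.cast_one]
    exact one_dvd _
  have hq := hR _ (Q.2.1.under _) (under_ne_bot _ Q.2.2) (under_notMem_primesBelow hd hQ) he
  rw [← factorsThrough_under_of_mem_invariantDivisors hd.2 (hP ⟨_, hq⟩)]
  exact h ⟨_, hq⟩

theorem relIndex_closure_ramificationIdxOver_smul_fiberDivisor (S : Set (PrimesOf L)) :
    (AddSubgroup.closure ((fun p => (ramificationIdxOver L p : ℤ) • fiberDivisor L p) ''
        {p | p.IsPrime ∧ p ≠ ⊥ ∧ p ∉ primesBelow K S})).relIndex
      (divisorsOutside S ⊓ invariantDivisors K L) =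
      ∏ᶠ (p : Ideal (𝓞 K)) (_ : p.IsPrime ∧ p ≠ ⊥ ∧ p ∉ primesBelow K S),
        ramificationIdxOver L p := by
  set R : Finset (Ideal (𝓞 K)) := ((finite_setOf_ramificationIdxOver_ne_one L).subset
    (t := {p | (p.IsPrime ∧ p ≠ ⊥ ∧ p ∉ primesBelow K S) ∧ ramificationIdxOver L p ≠ 1})
    fun _ hp => ⟨hp.1.1, hp.1.2.1, hp.2⟩).toFinset
  have hR {p : Ideal (𝓞 K)} : p ∈ R ↔
      (p.IsPrime ∧ p ≠ ⊥ ∧ p ∉ primesBelow K S) ∧ ramificationIdxOver L p ≠ 1 :=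
    Set.Finite.mem_toFinset _
  choose P hP using fun p : R => PrimesOf.exists_under_eq (L := L) (hR.1 p.2).1.1 (hR.1 p.2).1.2.1
  let φ : DivisorGroup L →+ ∀ p : R, ZMod (ramificationIdxOver L (p : Ideal (𝓞 K))) :=
    AddMonoidHom.pi fun p => (Int.castAddHom _).comp (Finsupp.applyAddHom (P p))
  rw [AddSubgroup.relIndex_eq_natCard_of_ker φ ?_ ?_, Nat.card_pi]
  · simp only [Nat.card_zmod]
    rw [Finset.prod_coe_sort R (ramificationIdxOver L)]
    exact (finprod_cond_eq_prod_of_cond_iff _ fun he => by rw [hR]; tauto).symm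
  · intro d hd
    rw [mem_closure_ramificationIdxOver_smul_fiberDivisor_iff hd,
      forall_ramificationIdxOver_dvd_iff hd (fun p hp hp0 hS he => hR.2 ⟨⟨hp, hp0, hS⟩, he⟩) hP,
      funext_iff]
    simp only [φ, AddMonoidHom.pi_apply, AddMonoidHom.comp_apply, Finsupp.applyAddHom_apply,
      Int.coe_castAddHom, Pi.zero_apply, ZMod.intCast_zmod_eq_zero_iff_dvd]
  · intro b
    refine ⟨∑ p : R, (b p).cast • fiberDivisor L (p : Ideal (𝓞 K)),
      sum_mem fun p _ => zsmul_mem ?_ _, funext fun q => ?_⟩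
    · exact ⟨fiberDivisor_mem_divisorsOutside (hR.1 p.2).1.2.2,
        fiberDivisor_mem_invariantDivisors _⟩
    simp only [φ, AddMonoidHom.pi_apply, AddMonoidHom.comp_apply, Finsupp.applyAddHom_apply,
      Int.coe_castAddHom, Finsupp.finsetSum_apply, Finsupp.smul_apply, fiberDivisor_apply, hP,
      smul_eq_mul, mul_ite, mul_one, mul_zero, ← Subtype.ext_iff, Finset.sum_ite_eq,
      Finset.mem_univ, if_true, ZMod.intCast_zmod_cast]

end AmbiguousDivisors

open scoped Classical in
theorem stmt_11_general (K L : Type*) [Field K] [NumberField K] [Field L] [NumberField L]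
    [Algebra K L] [IsGalois K L]
    (S : Set (PrimesOf L)) :
    (divisorsOutside S ⊓ invariantDivisors K L =
      AddSubgroup.closure {d : DivisorGroup L | ∃ p : Ideal (𝓞 K),
        p.IsPrime ∧ p ≠ ⊥ ∧ p ∉ primesBelow K S ∧ ∀ P : PrimesOf L,
          d P = if Ideal.comap (algebraMap (𝓞 K) (𝓞 L)) (P : Ideal (𝓞 L)) = p then 1 else 0}) ∧
    ((AddSubgroup.closure {d : DivisorGroup L | ∃ p : Ideal (𝓞 K),
        p.IsPrime ∧ p ≠ ⊥ ∧ p ∉ primesBelow K S ∧ ∀ P : PrimesOf L,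
          d P = if Ideal.comap (algebraMap (𝓞 K) (𝓞 L)) (P : Ideal (𝓞 L)) = p then
            (Ideal.ramificationIdx' p (P : Ideal (𝓞 L)) : ℤ)
          else 0}).relIndex (divisorsOutside S ⊓ invariantDivisors K L) =
      ∏ᶠ (p : Ideal (𝓞 K)) (_ : p.IsPrime ∧ p ≠ ⊥ ∧ p ∉ primesBelow K S),
        sSup {n : ℕ | ∃ P : PrimesOf L,
          Ideal.comap (algebraMap (𝓞 K) (𝓞 L)) (P : Ideal (𝓞 L)) = p ∧
          n = Ideal.ramificationIdx' p (P : Ideal (𝓞 L))}) := by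
  refine ⟨(divisorsOutside_inf_invariantDivisors_eq_closure S).trans (congrArg _ ?_),
    (congrArg (AddSubgroup.relIndex · _) (congrArg _ ?_)).trans
      (relIndex_closure_ramificationIdxOver_smul_fiberDivisor S)⟩
  · ext d
    constructor
    · rintro ⟨p, hp, rfl⟩
      exact ⟨p, hp.1, hp.2.1, hp.2.2, fiberDivisor_apply p⟩
    · rintro ⟨p, hp, hp0, hS, hd⟩
      exact ⟨p, ⟨hp, hp0, hS⟩, Finsupp.ext fun P => (hd P).symm⟩
  · ext d
    constructor
    · rintro ⟨p, hp, hp0, hS, hd⟩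
      exact ⟨p, ⟨hp, hp0, hS⟩, Finsupp.ext fun P =>
        (ramificationIdxOver_smul_fiberDivisor_apply p P).trans (hd P).symm⟩
    · rintro ⟨p, hp, rfl⟩
      exact ⟨p, hp.1, hp.2.1, hp.2.2, ramificationIdxOver_smul_fiberDivisor_apply p⟩

open scoped Classical in
/-- Let `L/K` be a finite Galois extension of number fields with group `C`, and let `D` be the
group of fractional ideals (divisors) of `L` supported outside a fixed `C`-stable finite set `S`
of primes of `L`. Then the group `D^C` of `C`-invariant such divisors is generated by the
divisors `∏_{P∣p} P = p^{1/e_p(L/K)}` for the primes `p` of `K` outside `S`, and the index in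
`D^C` of the group of divisors extended from `K` equals `∏_{p ∉ S} e_p(L/K)`. -/
theorem stmt_11 (K L : Type*) [Field K] [NumberField K] [Field L] [NumberField L]
    [Algebra K L] [FiniteDimensional K L] [IsGalois K L]
    (S : Set (PrimesOf L)) (hSfin : S.Finite)
    (hSstable : ∀ (σ : 𝓞 L ≃ₐ[𝓞 K] 𝓞 L), ∀ P ∈ S, ∀ Q : PrimesOf L,
      (Q : Ideal (𝓞 L)) = Ideal.comap (σ : 𝓞 L →+* 𝓞 L) (P : Ideal (𝓞 L)) → Q ∈ S) :
    (divisorsOutside S ⊓ invariantDivisors K L =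
      AddSubgroup.closure {d : DivisorGroup L | ∃ p : Ideal (𝓞 K),
        p.IsPrime ∧ p ≠ ⊥ ∧ p ∉ primesBelow K S ∧ ∀ P : PrimesOf L,
          d P = if Ideal.comap (algebraMap (𝓞 K) (𝓞 L)) (P : Ideal (𝓞 L)) = p then 1 else 0}) ∧
    ((AddSubgroup.closure {d : DivisorGroup L | ∃ p : Ideal (𝓞 K),
        p.IsPrime ∧ p ≠ ⊥ ∧ p ∉ primesBelow K S ∧ ∀ P : PrimesOf L,
          d P = if Ideal.comap (algebraMap (𝓞 K) (𝓞 L)) (P : Ideal (𝓞 L)) = p then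
            (Ideal.ramificationIdx' p (P : Ideal (𝓞 L)) : ℤ)
          else 0}).relIndex (divisorsOutside S ⊓ invariantDivisors K L) =
      ∏ᶠ (p : Ideal (𝓞 K)) (_ : p.IsPrime ∧ p ≠ ⊥ ∧ p ∉ primesBelow K S),
        sSup {n : ℕ | ∃ P : PrimesOf L,
          Ideal.comap (algebraMap (𝓞 K) (𝓞 L)) (P : Ideal (𝓞 L)) = p ∧
          n = Ideal.ramificationIdx' p (P : Ideal (𝓞 L))}) :=
  stmt_11_general K L S
end
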